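/- arXiv:0905.4418 — 5 statements merged into one kernel-verified Lean document; each statement's English description precedes it below -/
import Mathlib

section
/- Let L1, L2, L3 be two-dimensional vector spaces over ℂ, and let L12 ⊂ L1 ⊗ L2 and L23 ⊂ L2 ⊗ L3 be two-dimensional linear subspaces. If the intersection (L12 ⊗ L3) ∩ (L1 ⊗ L23) inside L1 ⊗ L2 ⊗ L3 contains a non-zero vector, then there exist non-zero vectors x1 ∈ L1, x2 ∈ L2, x3 ∈ L3 such that x1 ⊗ x2 ∈ L12 and x2 ⊗ x3 ∈ L23 (so that the non-zero product vector x1 ⊗ x2 ⊗ x3 lies in (L12 ⊗ L3) ∩ (L1 ⊗ L23)). -/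
open TensorProduct

/-- The subspace `L12 ⊗ L3` of `(L1 ⊗ L2) ⊗ L3`. -/
noncomputable def leftTensorSub {L1 L2 L3 : Type*} [AddCommGroup L1] [Module ℂ L1]
    [AddCommGroup L2] [Module ℂ L2] [AddCommGroup L3] [Module ℂ L3]
    (L12 : Submodule ℂ (L1 ⊗[ℂ] L2)) : Submodule ℂ ((L1 ⊗[ℂ] L2) ⊗[ℂ] L3) :=
  LinearMap.range (TensorProduct.mapIncl L12 (⊤ : Submodule ℂ L3))

/-- The subspace `L1 ⊗ L23` of `(L1 ⊗ L2) ⊗ L3`, transported along the associator. -/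
noncomputable def rightTensorSub {L1 L2 L3 : Type*} [AddCommGroup L1] [Module ℂ L1]
    [AddCommGroup L2] [Module ℂ L2] [AddCommGroup L3] [Module ℂ L3]
    (L23 : Submodule ℂ (L2 ⊗[ℂ] L3)) : Submodule ℂ ((L1 ⊗[ℂ] L2) ⊗[ℂ] L3) :=
  Submodule.map (TensorProduct.assoc ℂ L1 L2 L3).symm.toLinearMap
    (LinearMap.range (TensorProduct.mapIncl (⊤ : Submodule ℂ L1) L23))

open Module

/-!
Contracting `v` with a functional `ψ` on `L3` gives `v_ψ ∈ L12`, contracting it with a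
functional `χ` on `L1` gives `v^χ ∈ L23`. Contracting `v` with functionals `φ` on `L2` gives a
pencil of `2 × 2` tensors in `L1 ⊗ L3`; over `ℂ` it has a singular member, `v_φ = x1 ⊗ x3` with
`φ ≠ 0` (an eigenvalue argument). Let `x2` span `ker φ`. If `ψ x3 = 0`, then `φ` kills `v_ψ`,
so `v_ψ = y1 ⊗ x2`; dually `χ x1 = 0` gives `v^χ = x2 ⊗ y3`, which settles the case where such
contractions are nonzero. Otherwise, say, `v = w ⊗ x3` with `w ∈ L12` and every
`(χ ⊗ id) w ⊗ x3 ∈ L23`: either `w` is itself a product tensor, or these contractions exhaust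
`L2` and any product tensor in the plane `L12` works.
-/

section Contraction
variable {R M N : Type*} [CommSemiring R] [AddCommMonoid M] [Module R M]
  [AddCommMonoid N] [Module R N]

noncomputable def lcontract : Dual R M →ₗ[R] M ⊗[R] N →ₗ[R] N :=
  TensorProduct.uncurry (RingHom.id R) M N N ∘ₗ
    LinearMap.llcomp R M R (N →ₗ[R] N) (LinearMap.lsmul R N)

noncomputable def rcontract : Dual R N →ₗ[R] M ⊗[R] N →ₗ[R] M :=
  LinearMap.lcomp R M (TensorProduct.comm R M N).toLinearMap ∘ₗ lcontract

@[simp] lemma lcontract_tmul (χ : Dual R M) (m : M) (n : N) :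
    lcontract χ (m ⊗ₜ[R] n) = χ m • n := by
  simp [lcontract]

lemma rcontract_apply (ψ : Dual R N) (w : M ⊗[R] N) :
    rcontract ψ w = lcontract ψ (TensorProduct.comm R M N w) := rfl

@[simp] lemma rcontract_tmul (ψ : Dual R N) (m : M) (n : N) :
    rcontract ψ (m ⊗ₜ[R] n) = ψ n • m := by
  simp [rcontract_apply]

lemma sum_tmul_lcontract_coord {ι : Type*} [Fintype ι] (e : Basis ι R M) (w : M ⊗[R] N) :
    ∑ i, e i ⊗ₜ[R] lcontract (e.coord i) w = w := by
  induction w using TensorProduct.induction_on with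
  | zero => simp
  | tmul m n =>
    simp only [lcontract_tmul, Basis.coord_apply, ← smul_tmul, ← sum_tmul, e.sum_repr]
  | add w w' hw hw' => simp only [map_add, tmul_add, Finset.sum_add_distrib, hw, hw']

end Contraction

section Field
variable {K M N : Type*} [Field K] [AddCommGroup M] [Module K M] [AddCommGroup N] [Module K N]

lemma exists_ne_zero_apply_eq_zero (hM : 1 < finrank K M) (χ : Dual K M) :
    ∃ a ≠ 0, χ a = 0 := by
  have : FiniteDimensional K M := Module.finite_of_finrank_pos (by omega)
  have hker := LinearMap.ker_ne_bot_of_finrank_lt (f := χ) (by rwa [finrank_self])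
  obtain ⟨a, ha, ha0⟩ := (Submodule.ne_bot_iff _).mp hker
  exact ⟨a, ha0, ha⟩

lemma exists_dual_ne_zero_apply_eq_zero (hM : 1 < finrank K M) (a : M) :
    ∃ χ : Dual K M, χ ≠ 0 ∧ χ a = 0 :=
  exists_ne_zero_apply_eq_zero (by rwa [Subspace.dual_finrank_eq]) (Dual.eval K M a)

lemma tmul_ne_zero {a : M} {c : N} (ha : a ≠ 0) (hc : c ≠ 0) : a ⊗ₜ[K] c ≠ 0 := by
  obtain ⟨χ, hχ⟩ := Projective.exists_dual_eq_one K ha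
  intro h
  simpa [hχ, hc] using congr(lcontract χ $h)

lemma eq_zero_of_forall_lcontract_eq_zero [FiniteDimensional K M] {w : M ⊗[K] N}
    (hw : ∀ χ : Dual K M, lcontract χ w = 0) : w = 0 := by
  rw [← sum_tmul_lcontract_coord (Module.finBasis K M) w]
  simp [hw]

lemma exists_eq_tmul_of_lcontract_eq_zero (hM : finrank K M = 2) {χ : Dual K M} (hχ : χ ≠ 0)
    {a : M} (ha : a ≠ 0) (hχa : χ a = 0) {w : M ⊗[K] N} (hw : lcontract χ w = 0) :
    ∃ c, w = a ⊗ₜ[K] c := by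
  have : FiniteDimensional K M := Module.finite_of_finrank_pos (by omega)
  obtain ⟨b, hb⟩ : ∃ b, χ b ≠ 0 := by
    by_contra! h
    exact hχ (LinearMap.ext h)
  have hab : LinearIndependent K ![a, b] := by
    refine LinearIndependent.pair_iff.mpr fun s t hst => ?_
    have ht : t = 0 := by simpa [hχa, hb] using congr(χ $hst)
    subst ht
    simpa [ha] using hst
  obtain ⟨e, rfl, rfl⟩ : ∃ e : Basis (Fin 2) K M, e 0 = a ∧ e 1 = b :=
    ⟨basisOfLinearIndependentOfCardEqFinrank hab (by simp [hM]), by simp, by simp⟩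
  have he : χ = χ (e 1) • e.coord 1 := e.ext fun i => by
    fin_cases i <;> simp [hχa]
  have h1 : lcontract (e.coord 1) w = 0 := by
    rw [he, map_smul, LinearMap.smul_apply] at hw
    exact (smul_eq_zero.mp hw).resolve_left hb
  refine ⟨lcontract (e.coord 0) w, ?_⟩
  conv_lhs => rw [← sum_tmul_lcontract_coord e w]
  simp [Fin.sum_univ_two, h1]

lemma exists_eq_tmul_of_forall_lcontract_eq_zero (hM : finrank K M = 2) {a : M}
    {w : M ⊗[K] N} (hw0 : w ≠ 0) (hw : ∀ χ : Dual K M, χ a = 0 → lcontract χ w = 0) :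
    ∃ c, w = a ⊗ₜ[K] c := by
  have : FiniteDimensional K M := Module.finite_of_finrank_pos (by omega)
  have ha : a ≠ 0 := by
    rintro rfl
    exact hw0 (eq_zero_of_forall_lcontract_eq_zero fun χ => hw χ χ.map_zero)
  obtain ⟨χ, hχ, hχa⟩ := exists_dual_ne_zero_apply_eq_zero (K := K) (by omega) a
  exact exists_eq_tmul_of_lcontract_eq_zero hM hχ ha hχa (hw χ hχa)

lemma exists_eq_tmul_of_rcontract_eq_zero (hN : finrank K N = 2) {ψ : Dual K N} (hψ : ψ ≠ 0)
    {c : N} (hc : c ≠ 0) (hψc : ψ c = 0) {w : M ⊗[K] N} (hw : rcontract ψ w = 0) :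
    ∃ a, w = a ⊗ₜ[K] c := by
  obtain ⟨a, ha⟩ := exists_eq_tmul_of_lcontract_eq_zero hN hψ hc hψc hw
  exact ⟨a, by simpa using congr((TensorProduct.comm K M N).symm $ha)⟩

lemma exists_eq_tmul_of_forall_rcontract_eq_zero (hN : finrank K N = 2) {c : N}
    {w : M ⊗[K] N} (hw0 : w ≠ 0) (hw : ∀ ψ : Dual K N, ψ c = 0 → rcontract ψ w = 0) :
    ∃ a, w = a ⊗ₜ[K] c := by
  obtain ⟨a, ha⟩ := exists_eq_tmul_of_forall_lcontract_eq_zero hN (by simpa using hw0) hw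
  exact ⟨a, by simpa using congr((TensorProduct.comm K M N).symm $ha)⟩

end Field

section AlgClosed
variable {K V W U M N : Type*} [Field K] [IsAlgClosed K]
  [AddCommGroup V] [Module K V] [AddCommGroup W] [Module K W] [AddCommGroup U] [Module K U]
  [AddCommGroup M] [Module K M] [AddCommGroup N] [Module K N]

theorem exists_ne_zero_apply_apply_eq_zero [FiniteDimensional K W] [FiniteDimensional K U]
    [Nontrivial W] (hV : 1 < finrank K V) (hWU : finrank K W = finrank K U)
    (B : V →ₗ[K] W →ₗ[K] U) : ∃ φ ≠ 0, ∃ χ ≠ 0, B φ χ = 0 := by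
  have : Nontrivial V := Module.nontrivial_of_finrank_pos (R := K) (by omega)
  obtain ⟨φ₀, hφ₀⟩ := exists_ne (0 : V)
  obtain ⟨φ₁, hφ⟩ := exists_linearIndependent_pair_of_one_lt_finrank hV hφ₀
  by_cases hinj : Function.Injective (B φ₀)
  · let e : W ≃ₗ[K] U := LinearEquiv.ofBijective (B φ₀)
      ⟨hinj, (LinearMap.injective_iff_surjective_of_finrank_eq_finrank hWU).mp hinj⟩
    obtain ⟨μ, hμ⟩ := Module.End.exists_eigenvalue (e.symm.toLinearMap ∘ₗ B φ₁)
    obtain ⟨χ, hχ, hχ0⟩ := hμ.exists_hasEigenvector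
    refine ⟨φ₁ - μ • φ₀, fun h => ?_, χ, hχ0, ?_⟩
    · simpa using LinearIndependent.pair_iff.mp hφ (-μ) 1 (by rw [← h]; module)
    · have key := congr(e $(Module.End.mem_eigenspace_iff.mp hχ))
      simp only [LinearMap.comp_apply, LinearEquiv.coe_coe, LinearEquiv.apply_symm_apply,
        map_smul] at key
      rw [map_sub, map_smul, LinearMap.sub_apply, LinearMap.smul_apply, key]
      exact sub_self _
  · obtain ⟨χ, hχ, hχ0⟩ : ∃ χ, B φ₀ χ = 0 ∧ χ ≠ 0 := by
      simpa [injective_iff_map_eq_zero] using hinj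
    exact ⟨φ₀, hφ₀, χ, hχ0, hχ⟩

theorem exists_ne_zero_apply_eq_tmul (hV : 1 < finrank K V) (hM : finrank K M = 2)
    (hN : finrank K N = 2) (F : V →ₗ[K] M ⊗[K] N) : ∃ φ ≠ 0, ∃ a c, F φ = a ⊗ₜ[K] c := by
  have : FiniteDimensional K M := Module.finite_of_finrank_pos (by omega)
  have : FiniteDimensional K N := Module.finite_of_finrank_pos (by omega)
  have : Nontrivial (Dual K M) :=
    Module.nontrivial_of_finrank_pos (R := K) (by simp [hM])
  obtain ⟨φ, hφ, χ, hχ, hφχ⟩ := exists_ne_zero_apply_apply_eq_zero hV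
    (by simp [hM, hN]) (lcontract.flip ∘ₗ F)
  obtain ⟨a, ha, hχa⟩ := exists_ne_zero_apply_eq_zero (by omega) χ
  obtain ⟨c, hc⟩ := exists_eq_tmul_of_lcontract_eq_zero hM hχ ha hχa hφχ
  exact ⟨φ, hφ, a, c, hc⟩

theorem exists_tmul_mem_of_finrank_eq_two (hM : finrank K M = 2) (hN : finrank K N = 2)
    {S : Submodule K (M ⊗[K] N)} (hS : finrank K S = 2) :
    ∃ a c, a ≠ 0 ∧ c ≠ 0 ∧ a ⊗ₜ[K] c ∈ S := by
  obtain ⟨φ, hφ, a, c, hac⟩ := exists_ne_zero_apply_eq_tmul (by omega) hM hN S.subtype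
  have hac0 : a ⊗ₜ[K] c ≠ 0 := by simpa [← hac] using hφ
  exact ⟨a, c, fun h => hac0 (by simp [h]), fun h => hac0 (by simp [h]), hac ▸ φ.2⟩

theorem exists_tmul_mem_of_lcontract_mem (hM : finrank K M = 2) (hN : finrank K N = 2)
    {S : Submodule K (M ⊗[K] N)} (hS : finrank K S = 2) {P : Submodule K N}
    {w : M ⊗[K] N} (hwS : w ∈ S) (hw : w ≠ 0) (hwP : ∀ χ : Dual K M, lcontract χ w ∈ P) :
    ∃ a c, a ≠ 0 ∧ c ≠ 0 ∧ a ⊗ₜ[K] c ∈ S ∧ c ∈ P := by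
  by_cases hker : ∃ χ : Dual K M, χ ≠ 0 ∧ lcontract χ w = 0
  · obtain ⟨χ, hχ, hχw⟩ := hker
    obtain ⟨a, ha, hχa⟩ := exists_ne_zero_apply_eq_zero (by omega) χ
    obtain ⟨c, rfl⟩ := exists_eq_tmul_of_lcontract_eq_zero hM hχ ha hχa hχw
    obtain ⟨χ', hχ'⟩ := Projective.exists_dual_eq_one K ha
    exact ⟨a, c, ha, fun h => hw (by simp [h]), hwS, by simpa [hχ'] using hwP χ'⟩
  · have : FiniteDimensional K M := Module.finite_of_finrank_pos (by omega)
    have : FiniteDimensional K N := Module.finite_of_finrank_pos (by omega)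
    have hinj : Function.Injective (lcontract.flip w : Dual K M →ₗ[K] N) := by
      rw [injective_iff_map_eq_zero]
      intro χ hχ
      by_contra h
      exact hker ⟨χ, h, hχ⟩
    have hsurj := (LinearMap.injective_iff_surjective_of_finrank_eq_finrank
      (by simp [hM, hN])).mp hinj
    obtain ⟨a, c, ha, hc, hacS⟩ := exists_tmul_mem_of_finrank_eq_two hM hN hS
    obtain ⟨χ, rfl⟩ := hsurj c
    exact ⟨a, _, ha, hc, hacS, hwP χ⟩

theorem exists_tmul_mem_of_rcontract_mem (hM : finrank K M = 2) (hN : finrank K N = 2)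
    {S : Submodule K (N ⊗[K] M)} (hS : finrank K S = 2) {P : Submodule K N}
    {w : N ⊗[K] M} (hwS : w ∈ S) (hw : w ≠ 0) (hwP : ∀ ψ : Dual K M, rcontract ψ w ∈ P) :
    ∃ c a, c ≠ 0 ∧ a ≠ 0 ∧ c ⊗ₜ[K] a ∈ S ∧ c ∈ P := by
  obtain ⟨a, c, ha, hc, hS', hcP⟩ := exists_tmul_mem_of_lcontract_mem hM hN
    (S := S.map (TensorProduct.comm K N M : N ⊗[K] M →ₗ[K] M ⊗[K] N))
    (by rw [LinearEquiv.finrank_map_eq, hS])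
    (Submodule.mem_map_of_mem hwS) (by simpa using hw) hwP
  exact ⟨c, a, hc, ha, by simpa [Submodule.mem_map_equiv] using hS', hcP⟩

end AlgClosed

section TripleContraction
variable {R L1 L2 L3 : Type*} [CommSemiring R] [AddCommMonoid L1] [Module R L1]
  [AddCommMonoid L2] [Module R L2] [AddCommMonoid L3] [Module R L3]

noncomputable def mcontract : Dual R L2 →ₗ[R] (L1 ⊗[R] L2) ⊗[R] L3 →ₗ[R] L1 ⊗[R] L3 :=
  LinearMap.rTensorHom L3 ∘ₗ rcontract

@[simp] lemma mcontract_tmul (φ : Dual R L2) (a : L1) (b : L2) (c : L3) :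
    mcontract φ ((a ⊗ₜ[R] b) ⊗ₜ[R] c) = φ b • a ⊗ₜ[R] c := by
  simp [mcontract, smul_tmul']

lemma rcontract_rcontract (φ : Dual R L2) (ψ : Dual R L3) (v : (L1 ⊗[R] L2) ⊗[R] L3) :
    rcontract φ (rcontract ψ v) = rcontract ψ (mcontract φ v) := by
  have h : rcontract φ ∘ₗ rcontract ψ = rcontract ψ ∘ₗ mcontract (L1 := L1) φ :=
    ext_threefold fun a b c => by simp [smul_smul, mul_comm]
  exact congr($h v)

lemma lcontract_lcontract_assoc (φ : Dual R L2) (χ : Dual R L1) (v : (L1 ⊗[R] L2) ⊗[R] L3) :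
    lcontract φ (lcontract χ (TensorProduct.assoc R L1 L2 L3 v)) = lcontract χ (mcontract φ v) := by
  have h : lcontract φ ∘ₗ lcontract χ ∘ₗ (TensorProduct.assoc R L1 L2 L3).toLinearMap =
      lcontract χ ∘ₗ mcontract φ :=
    ext_threefold fun a b c => by simp [smul_smul, mul_comm]
  exact congr($h v)

lemma lcontract_assoc_tmul (χ : Dual R L1) (w : L1 ⊗[R] L2) (c : L3) :
    lcontract χ (TensorProduct.assoc R L1 L2 L3 (w ⊗ₜ[R] c)) = lcontract χ w ⊗ₜ[R] c := by
  induction w using TensorProduct.induction_on with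
  | zero => simp
  | tmul a b => simp [smul_tmul']
  | add w w' hw hw' => simp [add_tmul, hw, hw']

lemma rcontract_assoc_symm_tmul (ψ : Dual R L3) (a : L1) (w : L2 ⊗[R] L3) :
    rcontract ψ ((TensorProduct.assoc R L1 L2 L3).symm (a ⊗ₜ[R] w)) = a ⊗ₜ[R] rcontract ψ w := by
  induction w using TensorProduct.induction_on with
  | zero => simp
  | tmul b c => simp
  | add w w' hw hw' => simp [tmul_add, hw, hw']

end TripleContraction

section ProductTriple
variable {K L1 L2 L3 : Type*} [Field K] [AddCommGroup L1] [Module K L1]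
  [AddCommGroup L2] [Module K L2] [AddCommGroup L3] [Module K L3]
  {L12 : Submodule K (L1 ⊗[K] L2)} {L23 : Submodule K (L2 ⊗[K] L3)}
  {v : (L1 ⊗[K] L2) ⊗[K] L3}

lemma exists_tmul_mem_of_mcontract_eq_tmul (h2 : finrank K L2 = 2)
    (hL : ∀ ψ : Dual K L3, rcontract ψ v ∈ L12)
    (hR : ∀ χ : Dual K L1, lcontract χ (TensorProduct.assoc K L1 L2 L3 v) ∈ L23)
    {φ : Dual K L2} (hφ : φ ≠ 0) {x1 : L1} {x2 : L2} {x3 : L3} (hx2 : x2 ≠ 0)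
    (hφx2 : φ x2 = 0) (hφv : mcontract φ v = x1 ⊗ₜ[K] x3)
    {ψ : Dual K L3} (hψ : ψ x3 = 0) (hψv : rcontract ψ v ≠ 0)
    {χ : Dual K L1} (hχ : χ x1 = 0) (hχv : lcontract χ (TensorProduct.assoc K L1 L2 L3 v) ≠ 0) :
    ∃ (y1 : L1) (y2 : L2) (y3 : L3), y1 ≠ 0 ∧ y2 ≠ 0 ∧ y3 ≠ 0 ∧
      y1 ⊗ₜ[K] y2 ∈ L12 ∧ y2 ⊗ₜ[K] y3 ∈ L23 := by
  obtain ⟨y1, hy1⟩ := exists_eq_tmul_of_rcontract_eq_zero h2 hφ hx2 hφx2 (w := rcontract ψ v)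
    (by rw [rcontract_rcontract, hφv, rcontract_tmul, hψ, zero_smul])
  obtain ⟨y3, hy3⟩ := exists_eq_tmul_of_lcontract_eq_zero h2 hφ hx2 hφx2
    (w := lcontract χ (TensorProduct.assoc K L1 L2 L3 v))
    (by rw [lcontract_lcontract_assoc, hφv, lcontract_tmul, hχ, zero_smul])
  refine ⟨y1, x2, y3, fun h => hψv (by simp [hy1, h]), hx2, fun h => hχv (by simp [hy3, h]),
    hy1 ▸ hL ψ, hy3 ▸ hR χ⟩

variable [IsAlgClosed K]

lemma exists_tmul_mem_of_forall_rcontract_eq_zero (h1 : finrank K L1 = 2)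
    (h2 : finrank K L2 = 2) (h3 : finrank K L3 = 2) (h12 : finrank K L12 = 2)
    (hL : ∀ ψ : Dual K L3, rcontract ψ v ∈ L12)
    (hR : ∀ χ : Dual K L1, lcontract χ (TensorProduct.assoc K L1 L2 L3 v) ∈ L23)
    (hv : v ≠ 0) {x3 : L3} (hx3 : ∀ ψ : Dual K L3, ψ x3 = 0 → rcontract ψ v = 0) :
    ∃ (y1 : L1) (y2 : L2) (y3 : L3), y1 ≠ 0 ∧ y2 ≠ 0 ∧ y3 ≠ 0 ∧
      y1 ⊗ₜ[K] y2 ∈ L12 ∧ y2 ⊗ₜ[K] y3 ∈ L23 := by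
  obtain ⟨w, rfl⟩ := exists_eq_tmul_of_forall_rcontract_eq_zero h3 hv hx3
  have hx3 : x3 ≠ 0 := fun h => hv (by simp [h])
  obtain ⟨ψ, hψ⟩ := Projective.exists_dual_eq_one K hx3
  obtain ⟨y1, y2, hy1, hy2, hy12, hy23⟩ := exists_tmul_mem_of_lcontract_mem h1 h2 h12
    (P := L23.comap ((TensorProduct.mk K L2 L3).flip x3)) (by simpa [hψ] using hL ψ)
    (fun h => hv (by simp [h])) (fun χ => by simpa [lcontract_assoc_tmul] using hR χ)
  exact ⟨y1, y2, x3, hy1, hy2, hx3, hy12, hy23⟩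

lemma exists_tmul_mem_of_forall_lcontract_eq_zero (h1 : finrank K L1 = 2)
    (h2 : finrank K L2 = 2) (h3 : finrank K L3 = 2) (h23 : finrank K L23 = 2)
    (hL : ∀ ψ : Dual K L3, rcontract ψ v ∈ L12)
    (hR : ∀ χ : Dual K L1, lcontract χ (TensorProduct.assoc K L1 L2 L3 v) ∈ L23)
    (hv : v ≠ 0) {x1 : L1}
    (hx1 : ∀ χ : Dual K L1, χ x1 = 0 → lcontract χ (TensorProduct.assoc K L1 L2 L3 v) = 0) :
    ∃ (y1 : L1) (y2 : L2) (y3 : L3), y1 ≠ 0 ∧ y2 ≠ 0 ∧ y3 ≠ 0 ∧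
      y1 ⊗ₜ[K] y2 ∈ L12 ∧ y2 ⊗ₜ[K] y3 ∈ L23 := by
  obtain ⟨w, hw⟩ := exists_eq_tmul_of_forall_lcontract_eq_zero h1 (by simpa using hv) hx1
  rw [← LinearEquiv.eq_symm_apply] at hw
  subst hw
  have hx1 : x1 ≠ 0 := fun h => hv (by simp [h])
  obtain ⟨χ, hχ⟩ := Projective.exists_dual_eq_one K hx1
  obtain ⟨y2, y3, hy2, hy3, hy23, hy12⟩ := exists_tmul_mem_of_rcontract_mem h3 h2 h23
    (P := L12.comap (TensorProduct.mk K L1 L2 x1)) (by simpa [hχ] using hR χ)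
    (fun h => hv (by simp [h])) (fun ψ => by simpa [rcontract_assoc_symm_tmul] using hL ψ)
  exact ⟨x1, y2, y3, hx1, hy2, hy3, hy12, hy23⟩

theorem exists_tmul_mem_of_forall_contract_mem (h1 : finrank K L1 = 2)
    (h2 : finrank K L2 = 2) (h3 : finrank K L3 = 2)
    (h12 : finrank K L12 = 2) (h23 : finrank K L23 = 2)
    (hL : ∀ ψ : Dual K L3, rcontract ψ v ∈ L12)
    (hR : ∀ χ : Dual K L1, lcontract χ (TensorProduct.assoc K L1 L2 L3 v) ∈ L23)
    (hv : v ≠ 0) :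
    ∃ (y1 : L1) (y2 : L2) (y3 : L3), y1 ≠ 0 ∧ y2 ≠ 0 ∧ y3 ≠ 0 ∧
      y1 ⊗ₜ[K] y2 ∈ L12 ∧ y2 ⊗ₜ[K] y3 ∈ L23 := by
  obtain ⟨φ, hφ, x1, x3, hφv⟩ :=
    exists_ne_zero_apply_eq_tmul (by simp [h2]) h1 h3 (mcontract.flip v)
  obtain ⟨x2, hx2, hφx2⟩ := exists_ne_zero_apply_eq_zero (by omega) φ
  by_cases hx3 : ∀ ψ : Dual K L3, ψ x3 = 0 → rcontract ψ v = 0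
  · exact exists_tmul_mem_of_forall_rcontract_eq_zero h1 h2 h3 h12 hL hR hv hx3
  by_cases hx1 : ∀ χ : Dual K L1, χ x1 = 0 → lcontract χ (TensorProduct.assoc K L1 L2 L3 v) = 0
  · exact exists_tmul_mem_of_forall_lcontract_eq_zero h1 h2 h3 h23 hL hR hv hx1
  obtain ⟨ψ, hψ, hψv⟩ := not_forall₂.mp hx3
  obtain ⟨χ, hχ, hχv⟩ := not_forall₂.mp hx1
  exact exists_tmul_mem_of_mcontract_eq_tmul h2 hL hR hφ hx2 hφx2 hφv hψ hψv hχ hχv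

end ProductTriple

section Complex
variable {L1 L2 L3 : Type*} [AddCommGroup L1] [Module ℂ L1]
  [AddCommGroup L2] [Module ℂ L2] [AddCommGroup L3] [Module ℂ L3]

lemma rcontract_mem_of_mem_leftTensorSub {L12 : Submodule ℂ (L1 ⊗[ℂ] L2)}
    {v : (L1 ⊗[ℂ] L2) ⊗[ℂ] L3} (hv : v ∈ leftTensorSub L12) (ψ : Dual ℂ L3) :
    rcontract ψ v ∈ L12 := by
  obtain ⟨w, rfl⟩ := hv
  induction w using TensorProduct.induction_on with
  | zero => simp
  | tmul a c => simpa [TensorProduct.mapIncl] using L12.smul_mem _ a.2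
  | add w w' hw hw' => simpa using L12.add_mem hw hw'

lemma lcontract_assoc_mem_of_mem_rightTensorSub {L23 : Submodule ℂ (L2 ⊗[ℂ] L3)}
    {v : (L1 ⊗[ℂ] L2) ⊗[ℂ] L3} (hv : v ∈ rightTensorSub L23) (χ : Dual ℂ L1) :
    lcontract χ (TensorProduct.assoc ℂ L1 L2 L3 v) ∈ L23 := by
  obtain ⟨_, ⟨w, rfl⟩, rfl⟩ := hv
  simp only [LinearEquiv.coe_coe, LinearEquiv.apply_symm_apply]
  induction w using TensorProduct.induction_on with
  | zero => simp
  | tmul a b => simpa [TensorProduct.mapIncl] using L23.smul_mem _ b.2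
  | add w w' hw hw' => simpa using L23.add_mem hw hw'

lemma tmul_tmul_mem_leftTensorSub {L12 : Submodule ℂ (L1 ⊗[ℂ] L2)} {a : L1} {b : L2}
    (hab : a ⊗ₜ[ℂ] b ∈ L12) (c : L3) : (a ⊗ₜ[ℂ] b) ⊗ₜ[ℂ] c ∈ leftTensorSub L12 :=
  ⟨(⟨_, hab⟩ : L12) ⊗ₜ[ℂ] (⟨c, Submodule.mem_top⟩ : (⊤ : Submodule ℂ L3)),
    by simp [TensorProduct.mapIncl]⟩

lemma tmul_tmul_mem_rightTensorSub {L23 : Submodule ℂ (L2 ⊗[ℂ] L3)} {b : L2} {c : L3}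
    (a : L1) (hbc : b ⊗ₜ[ℂ] c ∈ L23) : (a ⊗ₜ[ℂ] b) ⊗ₜ[ℂ] c ∈ rightTensorSub L23 :=
  ⟨a ⊗ₜ[ℂ] (b ⊗ₜ[ℂ] c),
    ⟨(⟨a, Submodule.mem_top⟩ : (⊤ : Submodule ℂ L1)) ⊗ₜ[ℂ] (⟨_, hbc⟩ : L23),
      by simp [TensorProduct.mapIncl]⟩, by simp⟩

end Complex

theorem stmt_0 {L1 L2 L3 : Type*} [AddCommGroup L1] [Module ℂ L1]
    [AddCommGroup L2] [Module ℂ L2] [AddCommGroup L3] [Module ℂ L3]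
    (h1 : Module.finrank ℂ L1 = 2) (h2 : Module.finrank ℂ L2 = 2)
    (h3 : Module.finrank ℂ L3 = 2)
    (L12 : Submodule ℂ (L1 ⊗[ℂ] L2)) (L23 : Submodule ℂ (L2 ⊗[ℂ] L3))
    (h12 : Module.finrank ℂ L12 = 2) (h23 : Module.finrank ℂ L23 = 2)
    (hne : ∃ v ∈ leftTensorSub (L3 := L3) L12 ⊓ rightTensorSub (L1 := L1) L23, v ≠ 0) :
    ∃ (x1 : L1) (x2 : L2) (x3 : L3), x1 ≠ 0 ∧ x2 ≠ 0 ∧ x3 ≠ 0 ∧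
      x1 ⊗ₜ[ℂ] x2 ∈ L12 ∧ x2 ⊗ₜ[ℂ] x3 ∈ L23 ∧
      (x1 ⊗ₜ[ℂ] x2) ⊗ₜ[ℂ] x3 ≠ 0 ∧
      (x1 ⊗ₜ[ℂ] x2) ⊗ₜ[ℂ] x3 ∈ leftTensorSub (L3 := L3) L12 ⊓ rightTensorSub (L1 := L1) L23 := by
  obtain ⟨v, ⟨hvL, hvR⟩, hv⟩ := hne
  obtain ⟨x1, x2, x3, hx1, hx2, hx3, hx12, hx23⟩ :=
    exists_tmul_mem_of_forall_contract_mem h1 h2 h3 h12 h23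
      (rcontract_mem_of_mem_leftTensorSub hvL) (lcontract_assoc_mem_of_mem_rightTensorSub hvR) hv
  exact ⟨x1, x2, x3, hx1, hx2, hx3, hx12, hx23, tmul_ne_zero (tmul_ne_zero hx1 hx2) hx3,
    tmul_tmul_mem_leftTensorSub hx12 x3, tmul_tmul_mem_rightTensorSub x1 hx23⟩
end

section
/- Let L1, L2 be two-dimensional vector spaces over ℂ, let q be a quadratic form on L1 ⊗ L2 whose zero set is exactly the set of product vectors, and let L12 ⊂ L1 ⊗ L2 be a two-dimensional subspace with rank L12 = 2. Then there exist a basis {x1, y1} of L1 and a basis {x2, y2} of L2 such that L12 = span{x1 ⊗ x2, y1 ⊗ y2}; moreover every product vector in L12 is of the form λ·(x1 ⊗ x2) or λ·(y1 ⊗ y2) for some λ ∈ ℂ. -/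
/-!
Since `quadRankOn q L12 = 2`, the restriction of `q` to the plane `L12` is nondegenerate, so over
`ℂ` it is a hyperbolic plane: there are `e, f ∈ L12` with `q e = q f = 0` and `polar q e f ≠ 0`.
As `q (a • e + b • f) = a * b * polar q e f`, the isotropic vectors of `L12`, i.e. its product
vectors, are the multiples of `e` and of `f`. Writing `e = x₁ ⊗ x₂` and `f = y₁ ⊗ y₂`, the sum
`e + f` is not a product vector (else `polar q e f = q (e + f) - q e - q f = 0`), which forces both
`x₁, y₁` and `x₂, y₂` to be linearly independent, hence bases.
-/

open TensorProduct

/-- The rank of the restriction of a quadratic form `q` on `M` to a submodule `L`,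
defined as the rank of the polar (bilinear) form of the restriction. -/
noncomputable def quadRankOn {M : Type*} [AddCommGroup M] [Module ℂ M]
    (q : QuadraticForm ℂ M) (L : Submodule ℂ M) : ℕ :=
  Module.finrank ℂ (LinearMap.range (QuadraticMap.polarBilin (q.comp L.subtype)))

open Module QuadraticMap Submodule

theorem IsAlgClosed.exists_quadratic_eq_zero {K : Type*} [Field K] [IsAlgClosed K] {a : K}
    (ha : a ≠ 0) (b c : K) : ∃ t : K, a * t ^ 2 + b * t + c = 0 := by
  open Polynomial in
  have hdeg : (C a * X ^ 2 + C b * X + C c).degree = 2 := by compute_degree!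
  obtain ⟨t, ht⟩ := IsAlgClosed.exists_root _ (by rw [hdeg]; decide)
  exact ⟨t, by simpa using ht⟩

theorem LinearMap.ker_eq_bot_of_finrank_range_eq {K V W : Type*} [DivisionRing K]
    [AddCommGroup V] [Module K V] [FiniteDimensional K V] [AddCommGroup W] [Module K W]
    {f : V →ₗ[K] W} (h : finrank K (range f) = finrank K V) : ker f = ⊥ := by
  have := f.finrank_range_add_finrank_ker
  exact finrank_eq_zero.mp (by omega)

section

variable {K M : Type*} [Field K] [AddCommGroup M] [Module K M]

theorem Submodule.eq_span_pair_of_linearIndependent {L : Submodule K M} (hL : finrank K L = 2)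
    {x y : M} (hx : x ∈ L) (hy : y ∈ L) (hxy : LinearIndependent K ![x, y]) :
    L = span K {x, y} := by
  have : FiniteDimensional K L := Module.finite_of_finrank_eq_succ hL
  refine (eq_of_le_of_finrank_le (span_le.mpr (Set.insert_subset hx (by simpa))) ?_).symm
  rw [hL, ← Matrix.range_cons_cons_empty, finrank_span_eq_card hxy, Fintype.card_fin]

theorem Module.exists_basis_fin_two (h : finrank K M = 2) {x y : M}
    (hxy : LinearIndependent K ![x, y]) : ∃ b : Basis (Fin 2) K M, b 0 = x ∧ b 1 = y :=
  ⟨basisOfLinearIndependentOfCardEqFinrank hxy (by simp [h]), by simp, by simp⟩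

end

namespace TensorProduct

variable {K M N : Type*} [Field K] [AddCommGroup M] [Module K M] [AddCommGroup N] [Module K N]

theorem linearIndependent_left_of_tmul_add_tmul_ne_tmul {x y : M} {u v : N}
    (h : ∀ a b, x ⊗ₜ[K] u + y ⊗ₜ[K] v ≠ a ⊗ₜ b) : LinearIndependent K ![x, y] := by
  by_cases hx : x = 0
  · exact absurd (by simp [hx]) (h y v)
  refine (LinearIndependent.pair_iff' hx).mpr fun a ha => h x (u + a • v) ?_
  rw [← ha, smul_tmul, tmul_add]

theorem linearIndependent_right_of_tmul_add_tmul_ne_tmul {x y : M} {u v : N}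
    (h : ∀ a b, x ⊗ₜ[K] u + y ⊗ₜ[K] v ≠ a ⊗ₜ b) : LinearIndependent K ![u, v] := by
  by_cases hu : u = 0
  · exact absurd (by simp [hu]) (h y v)
  refine (LinearIndependent.pair_iff' hu).mpr fun a ha => h (x + a • y) u ?_
  rw [← ha, ← smul_tmul, add_tmul]

end TensorProduct

namespace QuadraticMap

section CommRing

variable {R M : Type*} [CommRing R] [AddCommGroup M] [Module R M] (Q : QuadraticForm R M)

theorem map_add_smul (x y : M) (t : R) :
    Q (x + t • y) = Q x + t * polar Q x y + t ^ 2 * Q y := by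
  rw [QuadraticMap.map_add (⇑Q), QuadraticMap.map_smul, polar_smul_right, smul_eq_mul,
    smul_eq_mul]
  ring

theorem map_smul_add_smul_of_isotropic {e f : M} (he : Q e = 0) (hf : Q f = 0) (a b : R) :
    Q (a • e + b • f) = a * b * polar Q e f := by
  rw [QuadraticMap.map_add (⇑Q), QuadraticMap.map_smul, QuadraticMap.map_smul, polar_smul_left,
    polar_smul_right, he, hf]
  simp only [smul_eq_mul]
  ring

end CommRing

variable {K M : Type*} [Field K] [AddCommGroup M] [Module K M] (Q : QuadraticForm K M)

theorem exists_isotropic_ne_zero [IsAlgClosed K] (h : 1 < finrank K M) :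
    ∃ e, e ≠ 0 ∧ Q e = 0 := by
  have : Nontrivial M := nontrivial_of_finrank_pos (R := K) (by omega)
  obtain ⟨x, hx⟩ := exists_ne (0 : M)
  obtain ⟨y, hxy⟩ := exists_linearIndependent_pair_of_one_lt_finrank h hx
  by_cases hy : Q y = 0
  · exact ⟨y, hxy.ne_zero 1, hy⟩
  obtain ⟨t, ht⟩ := IsAlgClosed.exists_quadratic_eq_zero hy (polar Q x y) (Q x)
  refine ⟨x + t • y, fun h0 => ?_, by rw [map_add_smul]; linear_combination ht⟩
  exact one_ne_zero (LinearIndependent.pair_iff.mp hxy 1 t (by rwa [one_smul])).1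

theorem exists_isotropic_polar_ne_zero (hker : LinearMap.ker (polarBilin Q) = ⊥) {e : M}
    (he0 : e ≠ 0) (he : Q e = 0) : ∃ f, Q f = 0 ∧ polar Q e f ≠ 0 := by
  obtain ⟨w, hw⟩ : ∃ w, polar Q e w ≠ 0 := by
    by_contra! h
    exact he0 (LinearMap.ker_eq_bot'.mp hker e (LinearMap.ext h))
  -- Correcting `w` along the isotropic line `K e` leaves its pairing with `e` unchanged.
  refine ⟨w + (-Q w / polar Q e w) • e, ?_, ?_⟩
  · rw [map_add_smul, he, polar_comm Q w e]
    field_simp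
    ring
  · rwa [polar_add_right, polar_smul_right, polar_self, he, smul_zero, smul_zero, add_zero]

theorem exists_isotropic_pair_polar_ne_zero [IsAlgClosed K] (h : 1 < finrank K M)
    (hker : LinearMap.ker (polarBilin Q) = ⊥) : ∃ e f, Q e = 0 ∧ Q f = 0 ∧ polar Q e f ≠ 0 := by
  obtain ⟨e, he0, he⟩ := Q.exists_isotropic_ne_zero h
  obtain ⟨f, hf, hef⟩ := Q.exists_isotropic_polar_ne_zero hker he0 he
  exact ⟨e, f, he, hf, hef⟩

variable {Q}

theorem linearIndependent_pair_of_polar_ne_zero {e f : M} (he : Q e = 0)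
    (hef : polar Q e f ≠ 0) : LinearIndependent K ![e, f] := by
  have he0 : e ≠ 0 := fun h => hef (by rw [h, polar_zero_left])
  refine LinearIndependent.pair_iff.mpr fun s t hst => ?_
  have ht : t * polar Q e f = 0 := by
    simpa [polar_add_right, polar_smul_right, polar_self, he] using congrArg (polar Q e) hst
  obtain rfl : t = 0 := (mul_eq_zero.mp ht).resolve_right hef
  simpa [he0] using hst

theorem exists_eq_smul_of_isotropic_mem_span_pair {e f v : M} (he : Q e = 0) (hf : Q f = 0)
    (hef : polar Q e f ≠ 0) (hv : v ∈ span K {e, f}) (hv0 : Q v = 0) :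
    ∃ c : K, v = c • e ∨ v = c • f := by
  obtain ⟨a, b, rfl⟩ := mem_span_pair.mp hv
  rw [map_smul_add_smul_of_isotropic Q he hf] at hv0
  rcases mul_eq_zero.mp ((mul_eq_zero.mp hv0).resolve_right hef) with rfl | rfl
  · exact ⟨b, Or.inr (by simp)⟩
  · exact ⟨a, Or.inl (by simp)⟩

end QuadraticMap

theorem stmt_2 {L1 L2 : Type*} [AddCommGroup L1] [Module ℂ L1]
    [AddCommGroup L2] [Module ℂ L2]
    (h1 : Module.finrank ℂ L1 = 2) (h2 : Module.finrank ℂ L2 = 2)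
    (q : QuadraticForm ℂ (L1 ⊗[ℂ] L2))
    (hq : ∀ v : L1 ⊗[ℂ] L2, q v = 0 ↔ ∃ (x : L1) (y : L2), v = x ⊗ₜ[ℂ] y)
    (L12 : Submodule ℂ (L1 ⊗[ℂ] L2)) (h12 : Module.finrank ℂ L12 = 2)
    (hrank : quadRankOn q L12 = 2) :
    ∃ (b1 : Module.Basis (Fin 2) ℂ L1) (b2 : Module.Basis (Fin 2) ℂ L2),
      L12 = Submodule.span ℂ {b1 0 ⊗ₜ[ℂ] b2 0, b1 1 ⊗ₜ[ℂ] b2 1} ∧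
      ∀ v ∈ L12, (∃ (x : L1) (y : L2), v = x ⊗ₜ[ℂ] y) →
        ∃ c : ℂ, v = c • (b1 0 ⊗ₜ[ℂ] b2 0) ∨ v = c • (b1 1 ⊗ₜ[ℂ] b2 1) := by
  have : FiniteDimensional ℂ L12 := Module.finite_of_finrank_eq_succ h12
  obtain ⟨e, f, he, hf, hef⟩ := (q.comp L12.subtype).exists_isotropic_pair_polar_ne_zero
    (by omega) (LinearMap.ker_eq_bot_of_finrank_range_eq (hrank.trans h12.symm))
  change q e = 0 at he
  change q f = 0 at hf
  change polar q e f ≠ 0 at hef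
  obtain ⟨x1, x2, hE⟩ := (hq e).mp he
  obtain ⟨y1, y2, hF⟩ := (hq f).mp hf
  have hsum : ∀ a b, x1 ⊗ₜ[ℂ] x2 + y1 ⊗ₜ y2 ≠ a ⊗ₜ b := fun a b hab =>
    hef (by simp [polar, he, hf, (hq (e + f)).mpr ⟨a, b, by rw [hE, hF, hab]⟩])
  obtain ⟨b1, hb10, hb11⟩ := exists_basis_fin_two h1
    (linearIndependent_left_of_tmul_add_tmul_ne_tmul hsum)
  obtain ⟨b2, hb20, hb21⟩ := exists_basis_fin_two h2
    (linearIndependent_right_of_tmul_add_tmul_ne_tmul hsum)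
  have hspan : L12 = span ℂ {(e : L1 ⊗[ℂ] L2), (f : L1 ⊗[ℂ] L2)} :=
    eq_span_pair_of_linearIndependent h12 e.2 f.2 (linearIndependent_pair_of_polar_ne_zero he hef)
  subst hb10 hb11 hb20 hb21
  refine ⟨b1, b2, hE ▸ hF ▸ hspan, fun v hv hv0 => ?_⟩
  rw [← hE, ← hF]
  exact exists_eq_smul_of_isotropic_mem_span_pair he hf hef (hspan ▸ hv) ((hq v).mpr hv0)
end

section
/- Let L1, L2 be two-dimensional vector spaces over ℂ, let q be a quadratic form on L1 ⊗ L2 whose zero set is exactly the set of product vectors, and let L12 ⊂ L1 ⊗ L2 be a two-dimensional subspace with rank L12 = 1. Then there exist a basis {x1, y1} of L1 and a basis {x2, y2} of L2 such that L12 = span{x1 ⊗ x2, y1 ⊗ x2 + x1 ⊗ y2}; moreover every product vector in L12 is of the form λ·(x1 ⊗ x2) for some λ ∈ ℂ. -/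
open TensorProduct

/-!
The radical of `q` restricted to the plane `L12` is a line spanned by a vector `p` with
`q p = 0`, and `q (s • p + t • w) = t² q w` for any `w` completing it to a basis, so the product
vectors of `L12` are exactly the multiples of `p`. Thus `p = x1 ⊗ x2`, and writing `w` in a basis
`{x1, z1} ⊗ {x2, z2}` with coefficients `a, b, c, d`, the vector `(cb - ad) p + d w` factors as
`(c x1 + d z1) ⊗ (b x2 + d z2)`, forcing `d = 0`. Then `w = (a x1 + b z1) ⊗ x2 + x1 ⊗ c z2`,
and `b, c ≠ 0` because `w` is not a product vector.
-/

open Module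

namespace QuadraticMap

section CommRing

variable {R M : Type*} [CommRing R] [AddCommGroup M] [Module R M] {Q : QuadraticForm R M}

theorem exists_apply_ne_zero_of_polarBilin_ne_zero (hQ : polarBilin Q ≠ 0) : ∃ w, Q w ≠ 0 := by
  contrapose! hQ
  ext x y
  simp [polar, hQ]

end CommRing

section Field

variable {K V : Type*} [Field K] [AddCommGroup V] [Module K V] {Q : QuadraticForm K V}

theorem eq_smul_of_apply_eq_zero_of_mem_span_pair {p w v : V} (hw : Q w ≠ 0)
    (hpw : ∀ s t : K, Q (s • p + t • w) = t * t * Q w) (hv : v ∈ Submodule.span K {p, w})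
    (hQv : Q v = 0) : ∃ c : K, v = c • p := by
  obtain ⟨s, t, rfl⟩ := Submodule.mem_span_pair.1 hv
  have ht : t = 0 := by simpa [hw] using (hpw s t).symm.trans hQv
  exact ⟨s, by simp [ht]⟩

variable [NeZero (2 : K)]

theorem apply_eq_zero_of_mem_ker_polarBilin {p : V} (hp : p ∈ LinearMap.ker (polarBilin Q)) :
    Q p = 0 := by
  have h : 2 • Q p = 0 := by
    rw [← polar_self, ← polarBilin_apply_apply, LinearMap.mem_ker.1 hp, LinearMap.zero_apply]
  rw [nsmul_eq_mul, Nat.cast_ofNat] at h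
  exact (mul_eq_zero.1 h).resolve_left two_ne_zero

theorem apply_smul_add_smul_of_mem_ker_polarBilin {p : V}
    (hp : p ∈ LinearMap.ker (polarBilin Q)) (s t : K) (w : V) :
    Q (s • p + t • w) = t * t * Q w := by
  have hpol : polar Q p w = 0 := by
    rw [← polarBilin_apply_apply, LinearMap.mem_ker.1 hp, LinearMap.zero_apply]
  rw [QuadraticMap.map_add ⇑Q, polar_smul_left, polar_smul_right, hpol, QuadraticMap.map_smul,
    QuadraticMap.map_smul, apply_eq_zero_of_mem_ker_polarBilin hp]
  simp

theorem exists_linearIndependent_of_finrank_range_polarBilin_eq_one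
    (hV : finrank K V = 2) (hQ : finrank K (LinearMap.range (polarBilin Q)) = 1) :
    ∃ p w : V, LinearIndependent K ![p, w] ∧ Q w ≠ 0 ∧
      ∀ s t : K, Q (s • p + t • w) = t * t * Q w := by
  have : FiniteDimensional K V := .of_finrank_pos (by omega)
  have hker : finrank K (LinearMap.ker (polarBilin Q)) = 1 := by
    have := LinearMap.finrank_range_add_finrank_ker (polarBilin Q)
    omega
  obtain ⟨p, hp, hp0⟩ := Submodule.exists_mem_ne_zero_of_ne_bot (p := LinearMap.ker (polarBilin Q))
    (by rintro h; rw [h, finrank_bot] at hker; cases hker)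
  obtain ⟨w, hw⟩ := exists_apply_ne_zero_of_polarBilin_ne_zero (Q := Q)
    (by rintro h; rw [h, LinearMap.range_zero, finrank_bot] at hQ; cases hQ)
  have hpw := fun s t => apply_smul_add_smul_of_mem_ker_polarBilin hp s t w
  refine ⟨p, w, LinearIndependent.pair_iff.2 fun s t hst => ?_, hw, hpw⟩
  have ht : t = 0 := by simpa [hst, hw] using hpw s t
  exact ⟨by simpa [ht, hp0] using hst, ht⟩

end Field

end QuadraticMap

theorem Submodule.exists_span_pair_of_quadRankOn_eq_one {M : Type*} [AddCommGroup M]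
    [Module ℂ M] {q : QuadraticForm ℂ M} {L : Submodule ℂ M} (hL : finrank ℂ L = 2)
    (hrank : quadRankOn q L = 1) :
    ∃ p w : M, L = span ℂ {p, w} ∧ p ≠ 0 ∧ q w ≠ 0 ∧
      ∀ s t : ℂ, q (s • p + t • w) = t * t * q w := by
  obtain ⟨p, w, hli, hw, hpw⟩ :=
    QuadraticMap.exists_linearIndependent_of_finrank_range_polarBilin_eq_one hL hrank
  have htop : span ℂ {p, w} = ⊤ := by
    have := hli.span_eq_top_of_card_eq_finrank (by simp [hL])
    rwa [Matrix.range_cons_cons_empty] at this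
  refine ⟨p, w, ?_, by simpa using hli.ne_zero 0, hw, hpw⟩
  rw [show ({(p : M), (w : M)} : Set M) = L.subtype '' {p, w} by simp [Set.image_pair],
    ← map_span, htop, map_subtype_top]

section TensorProduct

variable {R K L1 L2 : Type*} [AddCommGroup L1] [AddCommGroup L2]

theorem Module.Basis.exists_eq_sum_tmul_fin_two [CommSemiring R] [Module R L1] [Module R L2]
    (b1 : Basis (Fin 2) R L1) (b2 : Basis (Fin 2) R L2) (w : L1 ⊗[R] L2) :
    ∃ a b c d : R, w = a • (b1 0 ⊗ₜ b2 0) + b • (b1 1 ⊗ₜ b2 0) + c • (b1 0 ⊗ₜ b2 1) +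
      d • (b1 1 ⊗ₜ b2 1) := by
  set r := (b1.tensorProduct b2).repr w
  refine ⟨r (0, 0), r (1, 0), r (0, 1), r (1, 1), (b1.tensorProduct b2).sum_repr w |>.symm.trans ?_⟩
  simp only [Fintype.sum_prod_type, Fin.sum_univ_two, Basis.tensorProduct_apply]
  abel

theorem smul_tmul_add_smul_eq_tmul [CommRing R] [Module R L1] [Module R L2] (a b c d : R)
    (x1 y1 : L1) (x2 y2 : L2) :
    (c * b - a * d) • (x1 ⊗ₜ[R] x2) + d • (a • (x1 ⊗ₜ[R] x2) + b • (y1 ⊗ₜ x2) + c • (x1 ⊗ₜ y2) +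
      d • (y1 ⊗ₜ y2)) = (c • x1 + d • y1) ⊗ₜ (b • x2 + d • y2) := by
  simp only [tmul_add, add_tmul, smul_tmul_smul]
  module

variable [Field K] [Module K L1] [Module K L2]

theorem exists_eq_tmul_add_tmul_of_forall_ne_tmul (h1 : finrank K L1 = 2)
    (h2 : finrank K L2 = 2) {x1 : L1} {x2 : L2} (hx1 : x1 ≠ 0) (hx2 : x2 ≠ 0) {w : L1 ⊗[K] L2}
    (hw : ∀ s t : K, t ≠ 0 → ∀ y1 y2, s • (x1 ⊗ₜ x2) + t • w ≠ y1 ⊗ₜ y2) :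
    ∃ y1 y2, LinearIndependent K ![x1, y1] ∧ LinearIndependent K ![x2, y2] ∧
      w = y1 ⊗ₜ x2 + x1 ⊗ₜ y2 := by
  obtain ⟨z1, hz1⟩ := exists_linearIndependent_pair_of_one_lt_finrank (R := K) (by omega) hx1
  obtain ⟨z2, hz2⟩ := exists_linearIndependent_pair_of_one_lt_finrank (R := K) (by omega) hx2
  obtain ⟨a, b, c, d, hw_eq⟩ := Basis.exists_eq_sum_tmul_fin_two
    (basisOfLinearIndependentOfCardEqFinrank hz1 (by simp [h1]))
    (basisOfLinearIndependentOfCardEqFinrank hz2 (by simp [h2])) w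
  simp only [coe_basisOfLinearIndependentOfCardEqFinrank, Matrix.cons_val_zero,
    Matrix.cons_val_one] at hw_eq
  obtain rfl : d = 0 := by
    by_contra hd
    exact hw _ _ hd _ _ (hw_eq ▸ smul_tmul_add_smul_eq_tmul a b c d x1 z1 x2 z2)
  have hb : b ≠ 0 := by
    rintro rfl
    refine hw 0 1 one_ne_zero x1 (a • x2 + c • z2) ?_
    simp only [hw_eq, tmul_add, tmul_smul]
    module
  have hc : c ≠ 0 := by
    rintro rfl
    refine hw 0 1 one_ne_zero (a • x1 + b • z1) x2 ?_
    simp only [hw_eq, add_tmul, ← smul_tmul']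
    module
  refine ⟨a • x1 + b • z1, c • z2, ?_, ?_, ?_⟩
  · simpa using (LinearIndependent.pair_add_smul_add_smul_iff 1 0 a b).2 ⟨hz1, by simpa⟩
  · simpa using (LinearIndependent.pair_smul_smul_iff isUnit_one hc.isUnit).2 hz2
  · simp only [hw_eq, add_tmul, tmul_smul, ← smul_tmul']
    module

end TensorProduct

theorem stmt_3 {L1 L2 : Type*} [AddCommGroup L1] [Module ℂ L1]
    [AddCommGroup L2] [Module ℂ L2]
    (h1 : Module.finrank ℂ L1 = 2) (h2 : Module.finrank ℂ L2 = 2)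
    (q : QuadraticForm ℂ (L1 ⊗[ℂ] L2))
    (hq : ∀ v : L1 ⊗[ℂ] L2, q v = 0 ↔ ∃ (x : L1) (y : L2), v = x ⊗ₜ[ℂ] y)
    (L12 : Submodule ℂ (L1 ⊗[ℂ] L2)) (h12 : Module.finrank ℂ L12 = 2)
    (hrank : quadRankOn q L12 = 1) :
    ∃ (b1 : Module.Basis (Fin 2) ℂ L1) (b2 : Module.Basis (Fin 2) ℂ L2),
      L12 = Submodule.span ℂ {b1 0 ⊗ₜ[ℂ] b2 0, b1 1 ⊗ₜ[ℂ] b2 0 + b1 0 ⊗ₜ[ℂ] b2 1} ∧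
      ∀ v ∈ L12, (∃ (x : L1) (y : L2), v = x ⊗ₜ[ℂ] y) →
        ∃ c : ℂ, v = c • (b1 0 ⊗ₜ[ℂ] b2 0) := by
  obtain ⟨p, w, hspan, hp0, hqw, hqpw⟩ := L12.exists_span_pair_of_quadRankOn_eq_one h12 hrank
  obtain ⟨x1, x2, rfl⟩ := (hq p).1 (by simpa using hqpw 1 0)
  have hx1 : x1 ≠ 0 := by rintro rfl; simp at hp0
  have hx2 : x2 ≠ 0 := by rintro rfl; simp at hp0
  obtain ⟨y1, y2, hli1, hli2, rfl⟩ := exists_eq_tmul_add_tmul_of_forall_ne_tmul h1 h2 hx1 hx2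
    fun s t ht y1 y2 h => mul_ne_zero (mul_ne_zero ht ht) hqw <| by
      rw [← hqpw, hq]; exact ⟨y1, y2, h⟩
  refine ⟨basisOfLinearIndependentOfCardEqFinrank hli1 (by simp [h1]),
    basisOfLinearIndependentOfCardEqFinrank hli2 (by simp [h2]), by simpa using hspan,
    fun v hv hprod => ?_⟩
  simpa using QuadraticMap.eq_smul_of_apply_eq_zero_of_mem_span_pair hqw hqpw (hspan ▸ hv)
    ((hq v).2 hprod)
end

section
/- Let E1 be a two-dimensional vector space over ℂ and let E2 ⊂ E1 ⊗ E1, E3 ⊂ E1 ⊗ E1 ⊗ E1 be two-dimensional subspaces with E3 ⊂ (E2 ⊗ E1) ∩ (E1 ⊗ E2). If rank E2 = 1, then there exist a basis {x, y} of E1 and a number λ ∈ ℂ, λ ≠ 0, such that E3 = span{x ⊗ x ⊗ x, y ⊗ x ⊗ x + λ x ⊗ y ⊗ x + λ² x ⊗ x ⊗ y}. -/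
open TensorProduct

/-!
In a basis `w` of `E1`, a quadratic form on `E1 ⊗ E1` vanishing exactly on the product vectors is
a nonzero multiple of the determinant of the coefficient matrix `(t_ij)` of a 2-tensor. As `q`
has rank one on `E2`, its radical there is a line spanned by an isotropic, hence product, vector
`x ⊗ y`, and `E2` is spanned by `x ⊗ y` and any `V ∈ E2` with `q V ≠ 0`. If `x, y` are
proportional, then in a basis `(y, u)` the plane `E2` is cut out by `t₁₁ = 0`, `t₀₁ = λ t₁₀`;
otherwise, in the basis `(x, y)`, by `t₁₀ = 0`, `t₁₁ = λ t₀₀`, with `λ ≠ 0` in both cases.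
Contracting a 3-tensor of `(E2 ⊗ E1) ∩ (E1 ⊗ E2)` with a linear form on its last or first factor
lands in `E2`, so its coefficients `t_ijk` obey these relations in `(i, j)` for each `k` and in
`(j, k)` for each `i`. Solving them gives the asserted plane in the first case and `0` in the
second, which `dim E3 = 2` rules out.
-/

open QuadraticMap Module

lemma finrank_span_pair_le {K V : Type*} [DivisionRing K] [AddCommGroup V] [Module K V] (x y : V) :
    finrank K (Submodule.span K {x, y}) ≤ 2 := by
  classical
  have h := finrank_span_finset_le_card (R := K) ({x, y} : Finset V)
  rw [Finset.coe_pair] at h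
  exact h.trans Finset.card_le_two

lemma eq_span_pair_of_apply_eq_zero_of_apply_ne_zero {K E : Type*} [Field K] [AddCommGroup E]
    [Module K E] {q : QuadraticForm K E} {L : Submodule K E} (hL : finrank K L = 2) {P V : E}
    (hP : P ∈ L) (hV : V ∈ L) (hP0 : P ≠ 0) (hqP : q P = 0) (hqV : q V ≠ 0) :
    L = Submodule.span K {P, V} := by
  have : FiniteDimensional K L := .of_finrank_pos (by omega)
  have hli : LinearIndependent K ![P, V] := by
    simp only [linearIndependent_fin2, Matrix.cons_val_one, Matrix.cons_val_zero]
    refine ⟨fun h => hqV (by simp [h]), fun a ha => hP0 ?_⟩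
    have ha0 : a = 0 := by simpa [← ha, QuadraticMap.map_smul, hqV] using hqP
    simp [← ha, ha0]
  refine (Submodule.eq_of_le_of_finrank_le ?_ ?_).symm
  · simp [Submodule.span_le, Set.insert_subset_iff, hP, hV]
  · have h := finrank_span_eq_card hli
    rw [Matrix.range_cons_cons_empty] at h
    simp [h, hL]

section Contraction

variable {R L1 L2 L3 : Type*} [CommRing R] [AddCommGroup L1] [Module R L1] [AddCommGroup L2]
  [Module R L2] [AddCommGroup L3] [Module R L3]

noncomputable def contractLast (f : L3 →ₗ[R] R) : (L1 ⊗[R] L2) ⊗[R] L3 →ₗ[R] L1 ⊗[R] L2 :=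
  (TensorProduct.rid R (L1 ⊗[R] L2)).toLinearMap ∘ₗ (f.lTensor (L1 ⊗[R] L2))

noncomputable def contractFirst (f : L1 →ₗ[R] R) : (L1 ⊗[R] L2) ⊗[R] L3 →ₗ[R] L2 ⊗[R] L3 :=
  (TensorProduct.lid R (L2 ⊗[R] L3)).toLinearMap ∘ₗ f.rTensor (L2 ⊗[R] L3) ∘ₗ
    (TensorProduct.assoc R L1 L2 L3).toLinearMap

@[simp]
lemma contractLast_tmul (f : L3 →ₗ[R] R) (t : L1 ⊗[R] L2) (z : L3) :
    contractLast f (t ⊗ₜ z) = f z • t := by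
  simp [contractLast]

@[simp]
lemma contractFirst_assoc_symm_tmul (f : L1 →ₗ[R] R) (x : L1) (t : L2 ⊗[R] L3) :
    contractFirst f ((TensorProduct.assoc R L1 L2 L3).symm (x ⊗ₜ t)) = f x • t := by
  simp [contractFirst]

end Contraction

section Coordinates

variable {R M ι : Type*} [CommRing R] [AddCommGroup M] [Module R M] (w : Basis ι R M)

noncomputable def coord2 (i j : ι) : M ⊗[R] M →ₗ[R] R :=
  (w.tensorProduct w).coord (i, j)

noncomputable def coord3 (i j k : ι) : (M ⊗[R] M) ⊗[R] M →ₗ[R] R :=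
  ((w.tensorProduct w).tensorProduct w).coord ((i, j), k)

@[simp]
lemma coord2_tmul (i j : ι) (x y : M) :
    coord2 w i j (x ⊗ₜ y) = w.repr x i * w.repr y j := by
  simp [coord2, mul_comm]

@[simp]
lemma coord3_tmul (i j k : ι) (x y z : M) :
    coord3 w i j k ((x ⊗ₜ y) ⊗ₜ z) = w.repr x i * w.repr y j * w.repr z k := by
  simp [coord3, mul_comm, mul_left_comm]

lemma ext_coord3 {T T' : (M ⊗[R] M) ⊗[R] M} (h : ∀ i j k, coord3 w i j k T = coord3 w i j k T') :
    T = T' :=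
  ((w.tensorProduct w).tensorProduct w).ext_elem fun ⟨⟨i, j⟩, k⟩ => h i j k

@[simp]
lemma coord2_contractLast (i j k : ι) (T : (M ⊗[R] M) ⊗[R] M) :
    coord2 w i j (contractLast (w.coord k) T) = coord3 w i j k T := by
  induction T using TensorProduct.induction_on with
  | zero => simp
  | tmul t z => simp [coord2, coord3]
  | add s t hs ht => simp [hs, ht]

@[simp]
lemma coord2_contractFirst (i j k : ι) (T : (M ⊗[R] M) ⊗[R] M) :
    coord2 w j k (contractFirst (w.coord i) T) = coord3 w i j k T := by
  classical
  rw [← LinearMap.comp_apply]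
  congr 1
  refine ((w.tensorProduct w).tensorProduct w).ext fun ⟨⟨i', j'⟩, k'⟩ => ?_
  by_cases hi : i' = i <;> simp [contractFirst, Finsupp.single_apply, hi]

end Coordinates

section Slices

variable {L1 L2 L3 : Type*} [AddCommGroup L1] [Module ℂ L1] [AddCommGroup L2]
  [Module ℂ L2] [AddCommGroup L3] [Module ℂ L3]

lemma contractLast_mem_of_mem_leftTensorSub {L12 : Submodule ℂ (L1 ⊗[ℂ] L2)}
    {T : (L1 ⊗[ℂ] L2) ⊗[ℂ] L3} (hT : T ∈ leftTensorSub L12) (f : L3 →ₗ[ℂ] ℂ) :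
    contractLast f T ∈ L12 := by
  obtain ⟨t, rfl⟩ := hT
  induction t using TensorProduct.induction_on with
  | zero => simp
  | tmul p z => simpa [TensorProduct.mapIncl] using L12.smul_mem (f z) p.2
  | add s t hs ht => simpa using add_mem hs ht

lemma contractFirst_mem_of_mem_rightTensorSub {L23 : Submodule ℂ (L2 ⊗[ℂ] L3)}
    {T : (L1 ⊗[ℂ] L2) ⊗[ℂ] L3} (hT : T ∈ rightTensorSub L23) (f : L1 →ₗ[ℂ] ℂ) :
    contractFirst f T ∈ L23 := by
  obtain ⟨_, ⟨t, rfl⟩, rfl⟩ := hT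
  induction t using TensorProduct.induction_on with
  | zero => simp
  | tmul x p => simpa [TensorProduct.mapIncl] using L23.smul_mem (f x) p.2
  | add s t hs ht => simpa using add_mem hs ht

end Slices

section PureTensors

variable {R M N : Type*} [CommRing R] [AddCommGroup M] [Module R M] [AddCommGroup N] [Module R N]
  {q : QuadraticForm R (M ⊗[R] N)}

lemma polar_tmul_tmul_same_left (hq : ∀ x y, q (x ⊗ₜ y) = 0) (x : M) (y y' : N) :
    polar q (x ⊗ₜ y) (x ⊗ₜ y') = 0 := by
  simp [polar, ← TensorProduct.tmul_add, hq]

lemma polar_tmul_tmul_same_right (hq : ∀ x y, q (x ⊗ₜ y) = 0) (x x' : M) (y : N) :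
    polar q (x ⊗ₜ y) (x' ⊗ₜ y) = 0 := by
  simp [polar, ← TensorProduct.add_tmul, hq]

lemma polar_tmul_tmul_add_polar_tmul_tmul_swap (hq : ∀ x y, q (x ⊗ₜ y) = 0) (x x' : M) (y y' : N) :
    polar q (x ⊗ₜ y) (x' ⊗ₜ y') + polar q (x ⊗ₜ y') (x' ⊗ₜ y) = 0 := by
  have h := hq (x + x') (y + y')
  simp only [TensorProduct.add_tmul, TensorProduct.tmul_add, QuadraticMap.map_add (⇑q),
    polar_add_left, polar_add_right, hq, polar_tmul_tmul_same_left hq,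
    polar_tmul_tmul_same_right hq] at h
  rw [polar_comm q (x ⊗ₜ y')]
  linear_combination h

end PureTensors

section Determinant

variable {R M : Type*} [CommRing R] [AddCommGroup M] [Module R M] (w : Basis (Fin 2) R M)
  {q : QuadraticForm R (M ⊗[R] M)}

noncomputable def tensorDet (v : M ⊗[R] M) : R :=
  coord2 w 0 0 v * coord2 w 1 1 v - coord2 w 0 1 v * coord2 w 1 0 v

@[simp]
lemma tensorDet_tmul (x y : M) : tensorDet w (x ⊗ₜ y) = 0 := by
  simp only [tensorDet, coord2_tmul]
  ring

lemma apply_eq_polar_mul_tensorDet (hq : ∀ x y, q (x ⊗ₜ y) = 0) (v : M ⊗[R] M) :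
    q v = polar q (w 0 ⊗ₜ w 0) (w 1 ⊗ₜ w 1) * tensorDet w v := by
  have hv := (w.tensorProduct w).sum_repr v
  simp only [Fintype.sum_prod_type, Fin.sum_univ_two, Basis.tensorProduct_apply] at hv
  have hswap := polar_tmul_tmul_add_polar_tmul_tmul_swap hq (w 0) (w 1) (w 0) (w 1)
  conv_lhs => rw [← hv]
  simp only [QuadraticMap.map_add (⇑q), QuadraticMap.map_smul, polar_add_left, polar_add_right,
    polar_smul_left, polar_smul_right, smul_eq_mul, hq, polar_tmul_tmul_same_left hq,
    polar_tmul_tmul_same_right hq]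
  simp only [tensorDet, coord2, Basis.coord_apply]
  linear_combination ((w.tensorProduct w).repr v (0, 1) * (w.tensorProduct w).repr v (1, 0)) * hswap

lemma exists_ne_zero_forall_eq_mul_tensorDet [Nontrivial R]
    (hq : ∀ v, q v = 0 ↔ ∃ x y, v = x ⊗ₜ[R] y) :
    ∃ c ≠ 0, ∀ v, q v = c * tensorDet w v := by
  have hq0 (x y : M) : q (x ⊗ₜ y) = 0 := (hq _).2 ⟨x, y, rfl⟩
  refine ⟨_, fun hc => ?_, apply_eq_polar_mul_tensorDet w hq0⟩
  obtain ⟨x, y, hxy⟩ := (hq (w 0 ⊗ₜ w 0 + w 1 ⊗ₜ w 1)).1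
    (by rw [apply_eq_polar_mul_tensorDet w hq0, hc, zero_mul])
  have hdet := congrArg (tensorDet w) hxy
  rw [tensorDet_tmul] at hdet
  simp [tensorDet] at hdet

lemma polar_eq_of_forall_eq_mul_tensorDet {c : R} (hqc : ∀ v, q v = c * tensorDet w v)
    (u v : M ⊗[R] M) :
    polar q u v = c * (coord2 w 0 0 u * coord2 w 1 1 v + coord2 w 1 1 u * coord2 w 0 0 v
      - coord2 w 0 1 u * coord2 w 1 0 v - coord2 w 1 0 u * coord2 w 0 1 v) := by
  simp only [polar, hqc, tensorDet, map_add]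
  ring

end Determinant

section QuadRank

variable {E : Type*} [AddCommGroup E] [Module ℂ E] {q : QuadraticForm ℂ E} {L : Submodule ℂ E}

lemma exists_ne_zero_forall_polar_eq_zero [FiniteDimensional ℂ L]
    (h : quadRankOn q L < finrank ℂ L) : ∃ P ∈ L, P ≠ 0 ∧ ∀ M ∈ L, polar q P M = 0 := by
  have hker := (polarBilin (q.comp L.subtype)).finrank_range_add_finrank_ker
  obtain ⟨P, hP, hP0⟩ := Submodule.exists_mem_ne_zero_of_ne_bot
      (p := LinearMap.ker (polarBilin (q.comp L.subtype))) fun hbot => by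
    rw [hbot, finrank_bot] at hker
    exact h.ne (by rw [← hker, add_zero]; rfl)
  refine ⟨P, P.2, by simpa using hP0, fun M hM => ?_⟩
  simpa [polar] using LinearMap.congr_fun hP ⟨M, hM⟩

lemma exists_apply_ne_zero_of_quadRankOn_ne_zero (h : quadRankOn q L ≠ 0) :
    ∃ V ∈ L, q V ≠ 0 := by
  by_contra! hq
  refine h ?_
  have hzero : polarBilin (q.comp L.subtype) = 0 := by
    ext a b
    simp [polar, hq, add_mem]
  rw [quadRankOn, hzero, LinearMap.range_zero, finrank_bot]

end QuadRank

section RankOne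

variable {E : Type*} [AddCommGroup E] [Module ℂ E] {q : QuadraticForm ℂ (E ⊗[ℂ] E)}
  {E2 : Submodule ℂ (E ⊗[ℂ] E)} (w : Basis (Fin 2) ℂ E) {c : ℂ}

lemma coord2_relations_of_radical_smul_tmul_self (hc : c ≠ 0)
    (hqc : ∀ v, q v = c * tensorDet w v) {μ : ℂ} (hμ : μ ≠ 0) {V : E ⊗[ℂ] E}
    (hE2 : E2 = Submodule.span ℂ {(μ • w 0) ⊗ₜ w 0, V})
    (hrad : ∀ M ∈ E2, polar q ((μ • w 0) ⊗ₜ w 0) M = 0) (hqV : q V ≠ 0) :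
    ∃ l ≠ 0, ∀ M ∈ E2, coord2 w 1 1 M = 0 ∧ coord2 w 0 1 M = l * coord2 w 1 0 M := by
  have h11 (M) (hM : M ∈ E2) : coord2 w 1 1 M = 0 := by
    simpa [polar_eq_of_forall_eq_mul_tensorDet w hqc, hc, hμ] using hrad M hM
  have hV11 := h11 V (hE2 ▸ Submodule.subset_span (by simp))
  have hqV' : q V = -c * (coord2 w 0 1 V * coord2 w 1 0 V) := by
    rw [hqc, tensorDet, hV11]
    ring
  have h01 : coord2 w 0 1 V ≠ 0 := fun h => hqV (by simp [hqV', h])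
  have h10 : coord2 w 1 0 V ≠ 0 := fun h => hqV (by simp [hqV', h])
  refine ⟨coord2 w 0 1 V / coord2 w 1 0 V, div_ne_zero h01 h10, fun M hM => ⟨h11 M hM, ?_⟩⟩
  have hP : coord2 w 0 1 ((μ • w 0) ⊗ₜ w 0) = 0 ∧ coord2 w 1 0 ((μ • w 0) ⊗ₜ w 0) = 0 := by simp
  obtain ⟨s, t, rfl⟩ := Submodule.mem_span_pair.1 (hE2 ▸ hM)
  rw [div_mul_eq_mul_div, eq_div_iff h10]
  simp only [map_add, map_smul, smul_eq_mul, hP.1, hP.2]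
  ring

lemma coord2_relations_of_radical_tmul (hc : c ≠ 0) (hqc : ∀ v, q v = c * tensorDet w v)
    {V : E ⊗[ℂ] E} (hE2 : E2 = Submodule.span ℂ {w 0 ⊗ₜ w 1, V})
    (hrad : ∀ M ∈ E2, polar q (w 0 ⊗ₜ w 1) M = 0) (hqV : q V ≠ 0) :
    ∃ l ≠ 0, ∀ M ∈ E2, coord2 w 1 0 M = 0 ∧ coord2 w 1 1 M = l * coord2 w 0 0 M := by
  have h10 (M) (hM : M ∈ E2) : coord2 w 1 0 M = 0 := by
    simpa [polar_eq_of_forall_eq_mul_tensorDet w hqc, hc] using hrad M hM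
  have hV10 := h10 V (hE2 ▸ Submodule.subset_span (by simp))
  have hqV' : q V = c * (coord2 w 0 0 V * coord2 w 1 1 V) := by
    rw [hqc, tensorDet, hV10]
    ring
  have h00 : coord2 w 0 0 V ≠ 0 := fun h => hqV (by simp [hqV', h])
  have h11 : coord2 w 1 1 V ≠ 0 := fun h => hqV (by simp [hqV', h])
  refine ⟨coord2 w 1 1 V / coord2 w 0 0 V, div_ne_zero h11 h00, fun M hM => ⟨h10 M hM, ?_⟩⟩
  have hP : coord2 w 0 0 (w 0 ⊗ₜ w 1) = 0 ∧ coord2 w 1 1 (w 0 ⊗ₜ w 1) = 0 := by simp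
  obtain ⟨s, t, rfl⟩ := Submodule.mem_span_pair.1 (hE2 ▸ hM)
  rw [div_mul_eq_mul_div, eq_div_iff h00]
  simp only [map_add, map_smul, smul_eq_mul, hP.1, hP.2]
  ring

lemma exists_basis_coord2_relations (h1 : finrank ℂ E = 2)
    (hq : ∀ v, q v = 0 ↔ ∃ x y, v = x ⊗ₜ[ℂ] y) (h2 : finrank ℂ E2 = 2)
    (hrank : quadRankOn q E2 = 1) :
    ∃ (w : Basis (Fin 2) ℂ E) (l : ℂ), l ≠ 0 ∧
      ((∀ M ∈ E2, coord2 w 1 1 M = 0 ∧ coord2 w 0 1 M = l * coord2 w 1 0 M) ∨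
        (∀ M ∈ E2, coord2 w 1 0 M = 0 ∧ coord2 w 1 1 M = l * coord2 w 0 0 M)) := by
  have : FiniteDimensional ℂ E2 := .of_finrank_pos (by omega)
  obtain ⟨P, hP, hP0, hrad⟩ := exists_ne_zero_forall_polar_eq_zero (q := q) (L := E2) (by omega)
  obtain ⟨V, hV, hqV⟩ := exists_apply_ne_zero_of_quadRankOn_ne_zero (q := q) (L := E2) (by omega)
  have hqP : q P = 0 := by simpa [polar_self] using hrad P hP
  have hE2 := eq_span_pair_of_apply_eq_zero_of_apply_ne_zero h2 hP hV hP0 hqP hqV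
  obtain ⟨x, y, rfl⟩ := (hq P).1 hqP
  have hy : y ≠ 0 := by rintro rfl; simp at hP0
  by_cases hxy : x ∈ Submodule.span ℂ {y}
  · obtain ⟨μ, rfl⟩ := Submodule.mem_span_singleton.1 hxy
    have hμ : μ ≠ 0 := by rintro rfl; simp at hP0
    obtain ⟨z, hyz⟩ := exists_linearIndependent_pair_of_one_lt_finrank (R := ℂ) (by omega) hy
    let w := basisOfLinearIndependentOfCardEqFinrank hyz (by simp [h1])
    have hw : w 0 = y := by simp [w]
    obtain ⟨c, hc, hqc⟩ := exists_ne_zero_forall_eq_mul_tensorDet w hq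
    rw [← hw] at hE2 hrad
    obtain ⟨l, hl, hA⟩ := coord2_relations_of_radical_smul_tmul_self w hc hqc hμ hE2 hrad hqV
    exact ⟨w, l, hl, .inl hA⟩
  · have hxy' : LinearIndependent ℂ ![x, y] := by
      simp only [linearIndependent_fin2, Matrix.cons_val_one, Matrix.cons_val_zero]
      exact ⟨hy, fun a ha =>
        hxy (ha ▸ Submodule.smul_mem _ a (Submodule.mem_span_singleton_self y))⟩
    let w := basisOfLinearIndependentOfCardEqFinrank hxy' (by simp [h1])
    have hw0 : w 0 = x := by simp [w]
    have hw1 : w 1 = y := by simp [w]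
    obtain ⟨c, hc, hqc⟩ := exists_ne_zero_forall_eq_mul_tensorDet w hq
    rw [← hw0, ← hw1] at hE2 hrad
    obtain ⟨l, hl, hB⟩ := coord2_relations_of_radical_tmul w hc hqc hE2 hrad hqV
    exact ⟨w, l, hl, .inr hB⟩

end RankOne

section Intersection

variable {E : Type*} [AddCommGroup E] [Module ℂ E] {E2 : Submodule ℂ (E ⊗[ℂ] E)}
  (w : Basis (Fin 2) ℂ E) {l : ℂ}

lemma leftTensorSub_inf_rightTensorSub_le_span
    (hE2 : ∀ M ∈ E2, coord2 w 1 1 M = 0 ∧ coord2 w 0 1 M = l * coord2 w 1 0 M) :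
    leftTensorSub (L3 := E) E2 ⊓ rightTensorSub (L1 := E) E2 ≤ Submodule.span ℂ
      {(w 0 ⊗ₜ w 0) ⊗ₜ w 0,
        (w 1 ⊗ₜ w 0) ⊗ₜ w 0 + l • ((w 0 ⊗ₜ w 1) ⊗ₜ w 0) + l ^ 2 • ((w 0 ⊗ₜ w 0) ⊗ₜ w 1)} := by
  rintro T ⟨hTl, hTr⟩
  have hlast (k : Fin 2) := hE2 _ (contractLast_mem_of_mem_leftTensorSub hTl (w.coord k))
  have hfirst (i : Fin 2) := hE2 _ (contractFirst_mem_of_mem_rightTensorSub hTr (w.coord i))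
  simp only [coord2_contractLast, coord2_contractFirst] at hlast hfirst
  have h101 : coord3 w 1 0 1 T = 0 := by simpa [(hlast 0).1] using (hfirst 1).2
  have hT : T = coord3 w 0 0 0 T • ((w 0 ⊗ₜ w 0) ⊗ₜ w 0) + coord3 w 1 0 0 T •
      ((w 1 ⊗ₜ w 0) ⊗ₜ w 0 + l • ((w 0 ⊗ₜ w 1) ⊗ₜ w 0) + l ^ 2 • ((w 0 ⊗ₜ w 0) ⊗ₜ w 1)) := by
    refine ext_coord3 w fun i j k => ?_
    fin_cases i <;> fin_cases j <;> fin_cases k <;>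
      simp [(hlast 0).1, (hlast 1).1, (hfirst 0).1, (hfirst 0).2, (hlast 0).2, h101] <;> ring
  rw [hT]
  exact add_mem (Submodule.smul_mem _ _ (Submodule.subset_span (by simp)))
    (Submodule.smul_mem _ _ (Submodule.subset_span (by simp)))

lemma leftTensorSub_inf_rightTensorSub_eq_bot (hl : l ≠ 0)
    (hE2 : ∀ M ∈ E2, coord2 w 1 0 M = 0 ∧ coord2 w 1 1 M = l * coord2 w 0 0 M) :
    leftTensorSub (L3 := E) E2 ⊓ rightTensorSub (L1 := E) E2 = ⊥ := by
  refine eq_bot_iff.2 fun T ⟨hTl, hTr⟩ => (Submodule.mem_bot ℂ).2 ?_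
  have hlast (k : Fin 2) := hE2 _ (contractLast_mem_of_mem_leftTensorSub hTl (w.coord k))
  have hfirst (i : Fin 2) := hE2 _ (contractFirst_mem_of_mem_rightTensorSub hTr (w.coord i))
  simp only [coord2_contractLast, coord2_contractFirst] at hlast hfirst
  have h000 : coord3 w 0 0 0 T = 0 := by simpa [(hfirst 1).1, hl] using (hlast 0).2
  have h001 : coord3 w 0 0 1 T = 0 := by
    simpa [(hfirst 1).2, (hlast 0).1, hl] using (hlast 1).2
  refine ext_coord3 w fun i j k => ?_
  fin_cases i <;> fin_cases j <;> fin_cases k <;>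
    simp [(hlast 0).1, (hlast 1).1, (hfirst 0).1, (hfirst 1).1, (hfirst 0).2, (hfirst 1).2,
      h000, h001]

end Intersection

theorem stmt_8 {E1 : Type*} [AddCommGroup E1] [Module ℂ E1]
    (h1 : Module.finrank ℂ E1 = 2)
    (E2 : Submodule ℂ (E1 ⊗[ℂ] E1)) (E3 : Submodule ℂ ((E1 ⊗[ℂ] E1) ⊗[ℂ] E1))
    (h2 : Module.finrank ℂ E2 = 2) (h3 : Module.finrank ℂ E3 = 2)
    (hsub : E3 ≤ leftTensorSub (L3 := E1) E2 ⊓ rightTensorSub (L1 := E1) E2)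
    (q : QuadraticForm ℂ (E1 ⊗[ℂ] E1))
    (hq : ∀ v : E1 ⊗[ℂ] E1, q v = 0 ↔ ∃ x y : E1, v = x ⊗ₜ[ℂ] y)
    (hrank : quadRankOn q E2 = 1) :
    ∃ (b : Module.Basis (Fin 2) ℂ E1) (l : ℂ), l ≠ 0 ∧
      E3 = Submodule.span ℂ
        {(b 0 ⊗ₜ[ℂ] b 0) ⊗ₜ[ℂ] b 0,
         (b 1 ⊗ₜ[ℂ] b 0) ⊗ₜ[ℂ] b 0 + l • ((b 0 ⊗ₜ[ℂ] b 1) ⊗ₜ[ℂ] b 0)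
           + l ^ 2 • ((b 0 ⊗ₜ[ℂ] b 0) ⊗ₜ[ℂ] b 1)} := by
  have : FiniteDimensional ℂ E1 := .of_finrank_pos (by omega)
  obtain ⟨w, l, hl, hA | hB⟩ := exists_basis_coord2_relations h1 hq h2 hrank
  · refine ⟨w, l, hl, Submodule.eq_of_le_of_finrank_le
      (hsub.trans (leftTensorSub_inf_rightTensorSub_le_span w hA)) ?_⟩
    rw [h3]
    exact finrank_span_pair_le _ _
  · rw [leftTensorSub_inf_rightTensorSub_eq_bot w hl hB, le_bot_iff] at hsub
    subst hsub
    simp at h3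
end

section
/- Let E1 be a two-dimensional vector space over ℂ and let E2 ⊂ E1 ⊗ E1, E3 ⊂ E1 ⊗ E1 ⊗ E1 be two-dimensional subspaces with E3 ⊂ (E2 ⊗ E1) ∩ (E1 ⊗ E2). If rank E2 = 0 (equivalently, every vector of E2 is a product vector), then there exists a non-zero x ∈ E1 such that either E3 = E1 ⊗ x ⊗ x = {v ⊗ x ⊗ x : v ∈ E1} or E3 = x ⊗ x ⊗ E1 = {x ⊗ x ⊗ v : v ∈ E1}. -/
open TensorProduct

/-!
Rank zero means that the polar form of `q` vanishes on `E2`; since `polar q v v = 2 q v`, every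
vector of `E2` is a product vector. Fix `a ⊗ b ≠ 0` in `E2`. If `a ⊗ b + c ⊗ d` is a product vector
and `c ∉ ℂ a`, contracting the first factor with functionals separating `a` and `c` gives `d ∈ ℂ b`;
hence `E2 ⊆ (a ⊗ E1) ∪ (E1 ⊗ b)`, and a subspace covered by two subspaces lies in one of them.
If `E2 ⊆ E1 ⊗ x`, then `(E2 ⊗ E1) ∩ (E1 ⊗ E2) ⊆ (E1 ⊗ x ⊗ E1) ∩ (E1 ⊗ E1 ⊗ x) = E1 ⊗ x ⊗ x`,
and symmetrically for `E2 ⊆ x ⊗ E1`; both are two-dimensional, like `E3`.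
-/

theorem QuadraticMap.apply_eq_zero_of_quadRankOn_eq_zero {M : Type*} [AddCommGroup M]
    [Module ℂ M] {q : QuadraticForm ℂ M} {L : Submodule ℂ M} [FiniteDimensional ℂ L]
    (h : quadRankOn q L = 0) {v : M} (hv : v ∈ L) : q v = 0 := by
  have hpolar : polarBilin (q.comp L.subtype) = 0 :=
    LinearMap.range_eq_bot.1 (Submodule.finrank_eq_zero.1 h)
  simpa using congrArg (fun B ↦ LinearMap.BilinMap.toQuadraticMap B ⟨v, hv⟩) hpolar

theorem Submodule.mem_span_singleton_symm {K V : Type*} [Field K] [AddCommGroup V] [Module K V]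
    {x y : V} (hx : x ≠ 0) (h : x ∈ K ∙ y) : y ∈ K ∙ x := by
  obtain ⟨μ, rfl⟩ := Submodule.mem_span_singleton.1 h
  have hμ : μ ≠ 0 := by rintro rfl; simp at hx
  exact Submodule.mem_span_singleton.2 ⟨μ⁻¹, by rw [smul_smul, inv_mul_cancel₀ hμ, one_smul]⟩

namespace TensorProduct

variable {K V W : Type*} [Field K] [AddCommGroup V] [Module K V] [AddCommGroup W] [Module K W]

theorem mk_apply_injective {x : V} (hx : x ≠ 0) : Function.Injective (mk K V W x) := by
  obtain ⟨f, hf⟩ := Module.Projective.exists_dual_eq_one K hx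
  refine Function.LeftInverse.injective (g := TensorProduct.lid K W ∘ₗ f.rTensor W) fun w ↦ ?_
  simp [hf]

theorem flip_mk_apply_injective {x : W} (hx : x ≠ 0) :
    Function.Injective ((mk K V W).flip x) := by
  obtain ⟨f, hf⟩ := Module.Projective.exists_dual_eq_one K hx
  refine Function.LeftInverse.injective (g := TensorProduct.rid K V ∘ₗ f.lTensor V) fun v ↦ ?_
  simp [hf]

theorem tmul_self_ne_zero {x : V} (hx : x ≠ 0) : x ⊗ₜ[K] x ≠ 0 := fun h ↦
  hx (mk_apply_injective hx (h.trans (tmul_zero V x).symm))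

theorem mem_of_tmul_mem_range_mapIncl_top_right {S : Submodule K V} {s : V} {x : W} (hx : x ≠ 0)
    (h : s ⊗ₜ[K] x ∈ LinearMap.range (mapIncl S (⊤ : Submodule K W))) : s ∈ S := by
  obtain ⟨f, hf⟩ := Module.Projective.exists_dual_eq_one K hx
  have hS : LinearMap.range (mapIncl S ⊤) ≤ S.comap (TensorProduct.rid K V ∘ₗ f.lTensor V) := by
    rw [range_mapIncl, Submodule.map₂_le]
    intro m hm n _
    simpa using S.smul_mem (f n) hm
  simpa [hf] using hS h

theorem mem_of_tmul_mem_range_mapIncl_top_left {S : Submodule K W} {x : V} {t : W} (hx : x ≠ 0)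
    (h : x ⊗ₜ[K] t ∈ LinearMap.range (mapIncl (⊤ : Submodule K V) S)) : t ∈ S := by
  obtain ⟨f, hf⟩ := Module.Projective.exists_dual_eq_one K hx
  have hS : LinearMap.range (mapIncl ⊤ S) ≤ S.comap (TensorProduct.lid K W ∘ₗ f.rTensor W) := by
    rw [range_mapIncl, Submodule.map₂_le]
    intro m _ n hn
    simpa using S.smul_mem (f m) hn
  simpa [hf] using hS h

theorem mem_span_singleton_of_tmul_add_tmul_eq_tmul {a c p : V} {b d r : W} (hac : a ∉ K ∙ c)
    (h : a ⊗ₜ[K] b + c ⊗ₜ[K] d = p ⊗ₜ[K] r) : b ∈ K ∙ r := by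
  obtain ⟨f, hfa, hfc⟩ := Submodule.exists_dual_map_eq_bot_of_notMem hac inferInstance
  have hfc' : f c = 0 := by
    simpa [hfc] using Submodule.mem_map_of_mem (f := f) (Submodule.mem_span_singleton_self c)
  have hcontract : f a • b = f p • r := by
    simpa [hfc'] using congrArg ((TensorProduct.lid K W).toLinearMap ∘ₗ f.rTensor W) h
  refine Submodule.mem_span_singleton.2 ⟨(f a)⁻¹ * f p, ?_⟩
  rw [mul_smul, ← hcontract, smul_smul, inv_mul_cancel₀ hfa, one_smul]

theorem exists_le_range_mk_or_le_range_flip_mk {E : Submodule K (V ⊗[K] W)}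
    (hprod : ∀ t ∈ E, ∃ a b, t = a ⊗ₜ[K] b) (hE : E ≠ ⊥) :
    ∃ (a : V) (b : W), a ≠ 0 ∧ b ≠ 0 ∧
      (E ≤ LinearMap.range (mk K V W a) ∨ E ≤ LinearMap.range ((mk K V W).flip b)) := by
  obtain ⟨t, ht, ht0⟩ := Submodule.exists_mem_ne_zero_of_ne_bot hE
  obtain ⟨a, b, rfl⟩ := hprod t ht
  have ha : a ≠ 0 := by rintro rfl; simp at ht0
  have hb : b ≠ 0 := by rintro rfl; simp at ht0
  refine ⟨a, b, ha, hb, AddSubgroupClass.subset_union.1 fun w hw ↦ ?_⟩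
  obtain ⟨c, d, rfl⟩ := hprod w hw
  by_cases hc : c ∈ K ∙ a
  · obtain ⟨μ, rfl⟩ := Submodule.mem_span_singleton.1 hc
    exact Or.inl ⟨μ • d, by simp [smul_tmul]⟩
  · obtain ⟨p, r, hpr⟩ := hprod _ (E.add_mem ht hw)
    have hbr : b ∈ K ∙ r := mem_span_singleton_of_tmul_add_tmul_eq_tmul
      (fun h ↦ hc (Submodule.mem_span_singleton_symm ha h)) hpr
    have hdr : d ∈ K ∙ r :=
      mem_span_singleton_of_tmul_add_tmul_eq_tmul hc ((add_comm _ _).trans hpr)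
    obtain ⟨ν, rfl⟩ := Submodule.mem_span_singleton.1
      (Submodule.mem_span_singleton_trans hdr (Submodule.mem_span_singleton_symm hb hbr))
    exact Or.inr ⟨ν • c, by simp⟩

end TensorProduct

section TripleTensor

open TensorProduct LinearMap

variable {E : Type*} [AddCommGroup E] [Module ℂ E] {E2 : Submodule ℂ (E ⊗[ℂ] E)} {x : E}

theorem rightTensorSub_le_range_flip_mk (hE2 : E2 ≤ range ((mk ℂ E E).flip x)) :
    rightTensorSub (L1 := E) E2 ≤ range ((mk ℂ (E ⊗[ℂ] E) E).flip x) := by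
  rw [rightTensorSub, Submodule.map_le_iff_le_comap, range_mapIncl, Submodule.map₂_le]
  intro l _ t ht
  obtain ⟨m, rfl⟩ := hE2 ht
  exact ⟨l ⊗ₜ m, by simp⟩

theorem leftTensorSub_le_comap_range_mk (hE2 : E2 ≤ range (mk ℂ E E x)) :
    leftTensorSub (L3 := E) E2 ≤
      (range (mk ℂ E (E ⊗[ℂ] E) x)).comap (TensorProduct.assoc ℂ E E E).toLinearMap := by
  rw [leftTensorSub, range_mapIncl, Submodule.map₂_le]
  intro t ht n _
  obtain ⟨m, rfl⟩ := hE2 ht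
  exact ⟨m ⊗ₜ n, by simp⟩

theorem leftTensorSub_inf_rightTensorSub_le_of_le_range_flip_mk (hx : x ≠ 0)
    (hE2 : E2 ≤ range ((mk ℂ E E).flip x)) :
    leftTensorSub (L3 := E) E2 ⊓ rightTensorSub (L1 := E) E2 ≤
      range (((mk ℂ (E ⊗[ℂ] E) E).flip x).comp ((mk ℂ E E).flip x)) := by
  rintro z ⟨hzl, hzr⟩
  obtain ⟨s, rfl⟩ := rightTensorSub_le_range_flip_mk hE2 hzr
  obtain ⟨v, rfl⟩ := hE2 (mem_of_tmul_mem_range_mapIncl_top_right hx hzl)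
  exact ⟨v, rfl⟩

theorem leftTensorSub_inf_rightTensorSub_le_of_le_range_mk (hx : x ≠ 0)
    (hE2 : E2 ≤ range (mk ℂ E E x)) :
    leftTensorSub (L3 := E) E2 ⊓ rightTensorSub (L1 := E) E2 ≤
      range (mk ℂ (E ⊗[ℂ] E) E (x ⊗ₜ x)) := by
  intro z hz
  obtain ⟨hzl, hzr⟩ := Submodule.mem_inf.1 hz
  obtain ⟨t, ht : x ⊗ₜ[ℂ] t = TensorProduct.assoc ℂ E E E z⟩ :=
    leftTensorSub_le_comap_range_mk hE2 hzl
  rw [rightTensorSub, Submodule.mem_map_equiv, LinearEquiv.symm_symm, ← ht] at hzr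
  obtain ⟨w, rfl⟩ := hE2 (mem_of_tmul_mem_range_mapIncl_top_left hx hzr)
  exact ⟨w, (TensorProduct.assoc ℂ E E E).injective (by simpa using ht)⟩

end TripleTensor

theorem stmt_9 {E1 : Type*} [AddCommGroup E1] [Module ℂ E1]
    (h1 : Module.finrank ℂ E1 = 2)
    (E2 : Submodule ℂ (E1 ⊗[ℂ] E1)) (E3 : Submodule ℂ ((E1 ⊗[ℂ] E1) ⊗[ℂ] E1))
    (h2 : Module.finrank ℂ E2 = 2) (h3 : Module.finrank ℂ E3 = 2)
    (hsub : E3 ≤ leftTensorSub (L3 := E1) E2 ⊓ rightTensorSub (L1 := E1) E2)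
    (q : QuadraticForm ℂ (E1 ⊗[ℂ] E1))
    (hq : ∀ v : E1 ⊗[ℂ] E1, q v = 0 ↔ ∃ x y : E1, v = x ⊗ₜ[ℂ] y)
    (hrank : quadRankOn q E2 = 0) :
    ∃ x : E1, x ≠ 0 ∧
      (E3 = LinearMap.range (((TensorProduct.mk ℂ (E1 ⊗[ℂ] E1) E1).flip x).comp
              ((TensorProduct.mk ℂ E1 E1).flip x)) ∨
       E3 = LinearMap.range (TensorProduct.mk ℂ (E1 ⊗[ℂ] E1) E1 (x ⊗ₜ[ℂ] x))) := by
  have : FiniteDimensional ℂ E1 := Module.finite_of_finrank_eq_succ h1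
  have hprod : ∀ t ∈ E2, ∃ a b : E1, t = a ⊗ₜ[ℂ] b := fun t ht ↦
    (hq t).1 (QuadraticMap.apply_eq_zero_of_quadRankOn_eq_zero hrank ht)
  have hE2 : E2 ≠ ⊥ := by rintro rfl; simp at h2
  obtain ⟨a, b, ha, hb, hE2a | hE2b⟩ := exists_le_range_mk_or_le_range_flip_mk hprod hE2
  · refine ⟨a, ha, Or.inr (Submodule.eq_of_le_of_finrank_eq
      (hsub.trans (leftTensorSub_inf_rightTensorSub_le_of_le_range_mk ha hE2a)) ?_)⟩
    rw [h3, LinearMap.finrank_range_of_inj (mk_apply_injective (tmul_self_ne_zero ha)), h1]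
  · refine ⟨b, hb, Or.inl (Submodule.eq_of_le_of_finrank_eq
      (hsub.trans (leftTensorSub_inf_rightTensorSub_le_of_le_range_flip_mk hb hE2b)) ?_)⟩
    rw [h3, LinearMap.finrank_range_of_inj, h1]
    exact (flip_mk_apply_injective hb).comp (flip_mk_apply_injective hb)
end
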